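/- arXiv:2108.13472 — 5 statements merged into one kernel-verified Lean document; each statement's English description precedes it below -/
import Mathlib

section
/- Fix $\lambda_0 < 0 < \lambda_1$ and $y > 0$. The equation $\frac{e^{\lambda_1 y}}{\lambda_1 - \lambda_0} = \int_0^\infty \frac{e^{\lambda_1 s}}{(e^{\lambda_1 s} - \theta)^2} e^{\lambda_0 s}\, ds$ has a unique solution $\theta^* \in (0,1)$. -/
/-!
Write `G θ` for the right-hand side. For `θ ∈ [0, 1)` the integrand is dominated by
`(1 - t)⁻² e^{(λ₀ - λ₁) s}` uniformly in `θ ≤ t < 1`, so `G` is finite and continuous there, and it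
is strictly increasing because the integrand is. At `θ = 0` the integral is `1 / (λ₁ - λ₀)`, which
lies below the left-hand side since `y > 0`. Near `s = 0` the denominator is at most `(3(1 - θ))²`
on an interval of length `(1 - θ) / λ₁`, so `G θ ≥ c / (1 - θ)` and `G θ → ∞` as `θ → 1`. The
intermediate value theorem gives a root in `(0, 1)`, and strict monotonicity makes it unique.
-/

open Real MeasureTheory Set Filter Topology

namespace ThresholdEquation

noncomputable def integrand (lam0 lam1 θ s : ℝ) : ℝ :=
  exp (lam1 * s) / (exp (lam1 * s) - θ) ^ 2 * exp (lam0 * s)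

noncomputable def G (lam0 lam1 θ : ℝ) : ℝ :=
  ∫ s in Ioi 0, integrand lam0 lam1 θ s

section

variable {lam0 lam1 : ℝ}

lemma integrand_nonneg (lam0 lam1 θ s : ℝ) : 0 ≤ integrand lam0 lam1 θ s := by
  unfold integrand; positivity

lemma measurable_integrand (lam0 lam1 θ : ℝ) : Measurable (integrand lam0 lam1 θ) := by
  unfold integrand; fun_prop

lemma integrand_le (hlam1 : 0 ≤ lam1) {t θ s : ℝ} (ht0 : 0 ≤ t) (ht1 : t < 1) (hθt : θ ≤ t)
    (hs : 0 ≤ s) :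
    integrand lam0 lam1 θ s ≤ ((1 - t) ^ 2)⁻¹ * exp ((lam0 - lam1) * s) := by
  have hexp : 1 ≤ exp (lam1 * s) := one_le_exp (by positivity)
  have hden : (1 - t) * exp (lam1 * s) ≤ exp (lam1 * s) - θ := by nlinarith
  have hpos : 0 < (1 - t) * exp (lam1 * s) := mul_pos (by linarith) (exp_pos _)
  calc integrand lam0 lam1 θ s
      ≤ exp (lam1 * s) / ((1 - t) * exp (lam1 * s)) ^ 2 * exp (lam0 * s) := by
        unfold integrand; gcongr
    _ = ((1 - t) ^ 2)⁻¹ * exp ((lam0 - lam1) * s) := by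
        rw [show (lam0 - lam1) * s = lam0 * s - lam1 * s by ring, exp_sub]
        field_simp

lemma integrableOn_exp_sub_mul (hlam0 : lam0 < 0) (hlam1 : 0 < lam1) :
    IntegrableOn (fun s => exp ((lam0 - lam1) * s)) (Ioi 0) :=
  integrableOn_exp_mul_Ioi (by linarith) 0

lemma integrableOn_integrand (hlam0 : lam0 < 0) (hlam1 : 0 < lam1) {θ : ℝ} (hθ0 : 0 ≤ θ)
    (hθ1 : θ < 1) : IntegrableOn (integrand lam0 lam1 θ) (Ioi 0) := by
  refine ((integrableOn_exp_sub_mul hlam0 hlam1).const_mul ((1 - θ) ^ 2)⁻¹).mono'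
    (measurable_integrand _ _ _).aestronglyMeasurable ?_
  filter_upwards [ae_restrict_mem measurableSet_Ioi] with s hs
  rw [norm_of_nonneg (integrand_nonneg _ _ _ _)]
  exact integrand_le hlam1.le hθ0 hθ1 le_rfl (le_of_lt hs)

lemma G_zero (hlam0 : lam0 < 0) (hlam1 : 0 < lam1) : G lam0 lam1 0 = 1 / (lam1 - lam0) := by
  have h : integrand lam0 lam1 0 = fun s => exp ((lam0 - lam1) * s) := by
    ext s
    simp only [integrand, sub_zero, sub_mul, exp_sub]
    field_simp
  rw [G, h, integral_exp_mul_Ioi (by linarith), mul_zero, exp_zero, neg_div, ← div_neg, neg_sub]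

lemma integrand_lt_integrand (hlam1 : 0 ≤ lam1) {θ₁ θ₂ s : ℝ} (h₁₂ : θ₁ < θ₂) (h₂ : θ₂ < 1)
    (hs : 0 ≤ s) : integrand lam0 lam1 θ₁ s < integrand lam0 lam1 θ₂ s := by
  have hexp : 1 ≤ exp (lam1 * s) := one_le_exp (by positivity)
  have hden : 0 < exp (lam1 * s) - θ₂ := by linarith
  have hsq : (exp (lam1 * s) - θ₂) ^ 2 < (exp (lam1 * s) - θ₁) ^ 2 := by nlinarith
  unfold integrand
  gcongr

lemma strictMonoOn_G (hlam0 : lam0 < 0) (hlam1 : 0 < lam1) :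
    StrictMonoOn (G lam0 lam1) (Ico 0 1) := by
  intro θ₁ h₁ θ₂ h₂ h₁₂
  have hi₁ := integrableOn_integrand hlam0 hlam1 h₁.1 h₁.2
  have hi₂ := integrableOn_integrand hlam0 hlam1 h₂.1 h₂.2
  have hlt : ∀ s ∈ Ioi (0 : ℝ), integrand lam0 lam1 θ₁ s < integrand lam0 lam1 θ₂ s :=
    fun s hs => integrand_lt_integrand hlam1.le h₁₂ h₂.2 (le_of_lt hs)
  have hpos : 0 < ∫ s in Ioi 0, (integrand lam0 lam1 θ₂ - integrand lam0 lam1 θ₁) s := by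
    rw [setIntegral_pos_iff_support_of_nonneg_ae ?_ (hi₂.sub hi₁)]
    · refine lt_of_lt_of_le ?_ (measure_mono fun s hs => ⟨?_, hs⟩)
      · simp
      · exact sub_ne_zero.mpr (hlt s hs).ne'
    · filter_upwards [ae_restrict_mem measurableSet_Ioi] with s hs
      exact sub_nonneg.mpr (hlt s hs).le
  simp only [Pi.sub_apply] at hpos
  rw [integral_sub hi₂ hi₁, sub_pos] at hpos
  exact hpos

lemma continuousOn_G (hlam0 : lam0 < 0) (hlam1 : 0 < lam1) :
    ContinuousOn (G lam0 lam1) (Ico 0 1) := by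
  intro θ₀ hθ₀
  obtain ⟨t, hθ₀t, ht1⟩ := exists_between hθ₀.2
  refine (continuousAt_of_dominated
    (bound := fun s => ((1 - t) ^ 2)⁻¹ * exp ((lam0 - lam1) * s))
    (Eventually.of_forall fun θ => (measurable_integrand _ _ θ).aestronglyMeasurable)
    ?_ ((integrableOn_exp_sub_mul hlam0 hlam1).const_mul _) ?_).continuousWithinAt
  · filter_upwards [eventually_lt_nhds hθ₀t] with θ hθ
    filter_upwards [ae_restrict_mem measurableSet_Ioi] with s hs
    rw [norm_of_nonneg (integrand_nonneg _ _ _ _)]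
    exact integrand_le hlam1.le (hθ₀.1.trans hθ₀t.le) ht1 hθ.le (le_of_lt hs)
  · filter_upwards [ae_restrict_mem measurableSet_Ioi] with s hs
    have hden : exp (lam1 * s) - θ₀ ≠ 0 := by
      linarith [one_le_exp (mul_pos hlam1 hs).le, hθ₀.2]
    unfold integrand
    fun_prop (disch := exact pow_ne_zero 2 hden)

lemma integrand_ge (hlam0 : lam0 < 0) (hlam1 : 0 < lam1) {θ s : ℝ} (hθ0 : 0 ≤ θ)
    (hs : s ∈ Ioc 0 ((1 - θ) / lam1)) :
    exp (lam0 / lam1) / (3 * (1 - θ)) ^ 2 ≤ integrand lam0 lam1 θ s := by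
  obtain ⟨hs0, hs1⟩ := hs
  have hlam1s_pos : 0 < lam1 * s := mul_pos hlam1 hs0
  have hlam1s : lam1 * s ≤ 1 - θ := by rwa [le_div_iff₀ hlam1, mul_comm] at hs1
  have hexp : 1 ≤ exp (lam1 * s) := one_le_exp hlam1s_pos.le
  have hden : 0 < exp (lam1 * s) - θ := by linarith
  -- `e^x - 1 ≤ 2x` for `0 ≤ x ≤ 1` bounds the denominator by `3(1 - θ)`
  have hexp_sub : exp (lam1 * s) - 1 ≤ 2 * (lam1 * s) := by
    have h := abs_exp_sub_one_le (x := lam1 * s) (by rw [abs_of_pos hlam1s_pos]; linarith)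
    rwa [abs_of_nonneg (by linarith), abs_of_pos hlam1s_pos] at h
  have hnum : lam0 / lam1 ≤ lam0 * s := by
    have hratio : lam0 / lam1 < 0 := div_neg_of_neg_of_pos hlam0 hlam1
    have : lam0 * s = lam0 / lam1 * (lam1 * s) := by field_simp
    nlinarith
  calc exp (lam0 / lam1) / (3 * (1 - θ)) ^ 2
      ≤ exp (lam0 * s) / (exp (lam1 * s) - θ) ^ 2 := by
        gcongr
        linarith
    _ ≤ integrand lam0 lam1 θ s := by
        rw [integrand, div_mul_eq_mul_div]
        gcongr
        exact le_mul_of_one_le_left (exp_pos _).le hexp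

lemma G_lower_bound (hlam0 : lam0 < 0) (hlam1 : 0 < lam1) {θ : ℝ} (hθ0 : 0 ≤ θ) (hθ1 : θ < 1) :
    exp (lam0 / lam1) / (9 * lam1) * (1 - θ)⁻¹ ≤ G lam0 lam1 θ := by
  have hδ : 0 ≤ (1 - θ) / lam1 := div_nonneg (by linarith) hlam1.le
  calc exp (lam0 / lam1) / (9 * lam1) * (1 - θ)⁻¹
      = ∫ _ in Ioc 0 ((1 - θ) / lam1), exp (lam0 / lam1) / (3 * (1 - θ)) ^ 2 := by
        rw [setIntegral_const, Real.volume_real_Ioc_of_le hδ, smul_eq_mul]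
        have : 1 - θ ≠ 0 := by linarith
        field_simp
        ring
    _ ≤ ∫ s in Ioc 0 ((1 - θ) / lam1), integrand lam0 lam1 θ s :=
        setIntegral_mono_on (integrableOn_const (by simp) (by simp))
          ((integrableOn_integrand hlam0 hlam1 hθ0 hθ1).mono_set Ioc_subset_Ioi_self)
          measurableSet_Ioc fun s hs => integrand_ge hlam0 hlam1 hθ0 hs
    _ ≤ G lam0 lam1 θ :=
        setIntegral_mono_set (integrableOn_integrand hlam0 hlam1 hθ0 hθ1)
          (Eventually.of_forall (integrand_nonneg _ _ _)) Ioc_subset_Ioi_self.eventuallyLE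

lemma tendsto_G_nhdsLT_one (hlam0 : lam0 < 0) (hlam1 : 0 < lam1) :
    Tendsto (G lam0 lam1) (𝓝[<] 1) atTop := by
  have hsub : Tendsto (fun θ : ℝ => 1 - θ) (𝓝[<] 1) (𝓝[>] 0) := by
    refine tendsto_nhdsWithin_of_tendsto_nhds_of_eventually_within _ ?_ ?_
    · simpa using ((continuous_sub_left (1 : ℝ)).tendsto 1).mono_left nhdsWithin_le_nhds
    · filter_upwards [self_mem_nhdsWithin] with θ hθ
      exact sub_pos.mpr (mem_Iio.mp hθ)
  refine tendsto_atTop_mono' _ ?_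
    ((tendsto_inv_nhdsGT_zero.comp hsub).const_mul_atTop
      (show 0 < exp (lam0 / lam1) / (9 * lam1) by positivity))
  filter_upwards [Ioo_mem_nhdsLT zero_lt_one] with θ hθ
  exact G_lower_bound hlam0 hlam1 hθ.1.le hθ.2

end

end ThresholdEquation

/-- The equation `e^{λ₁ y}/(λ₁-λ₀) = ∫₀^∞ e^{λ₁ s}/(e^{λ₁ s}-θ)² e^{λ₀ s} ds`
has a unique solution `θ* ∈ (0,1)`. -/
theorem stmt_6 (lam0 lam1 y : ℝ) (hlam0 : lam0 < 0) (hlam1 : 0 < lam1) (hy : 0 < y) :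
    ∃! theta : ℝ, theta ∈ Set.Ioo (0:ℝ) 1 ∧
      Real.exp (lam1 * y) / (lam1 - lam0) =
        ∫ s in Set.Ioi (0:ℝ),
          Real.exp (lam1 * s) / (Real.exp (lam1 * s) - theta) ^ 2 * Real.exp (lam0 * s) := by
  open ThresholdEquation in
  set M := exp (lam1 * y) / (lam1 - lam0)
  have hG0 : G lam0 lam1 0 < M := by
    rw [G_zero hlam0 hlam1]
    exact div_lt_div_of_pos_right (one_lt_exp_iff.mpr (mul_pos hlam1 hy)) (by linarith)
  obtain ⟨θ₁, hθ₁_gt, hθ₁_mem⟩ :=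
    (((tendsto_G_nhdsLT_one hlam0 hlam1).eventually_gt_atTop M).and
      (Ioo_mem_nhdsLT zero_lt_one)).exists
  obtain ⟨θ, hθ, hGθ⟩ := intermediate_value_Icc hθ₁_mem.1.le
    ((continuousOn_G hlam0 hlam1).mono (Icc_subset_Ico_right hθ₁_mem.2)) ⟨hG0.le, hθ₁_gt.le⟩
  have hθ_ne : θ ≠ 0 := by rintro rfl; exact hG0.ne hGθ
  have hθI : θ ∈ Ioo 0 1 := ⟨hθ.1.lt_of_ne' hθ_ne, hθ.2.trans_lt hθ₁_mem.2⟩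
  refine ⟨θ, ⟨hθI, hGθ.symm⟩, fun θ' ⟨hθ', hGθ'⟩ => ?_⟩
  exact (strictMonoOn_G hlam0 hlam1).injOn (Ioo_subset_Ico_self hθ') (Ioo_subset_Ico_self hθI)
    (hGθ'.symm.trans hGθ.symm)
end

section
/- Fix $\lambda_0 < 0 < \lambda_1$, $\mu > 0$. For $y > 0$ let $\theta^*(y) \in (0,1)$ be the unique solution of $\frac{e^{\lambda_1 y}}{\lambda_1-\lambda_0} = \int_0^\infty \frac{e^{\lambda_1 s}}{(e^{\lambda_1 s}-\theta)^2} e^{\lambda_0 s} ds$. Then the map $y \mapsto \mu\int_0^\infty \frac{e^{\lambda_1 s}}{e^{\lambda_1 s} - \theta^*(y)} e^{\lambda_0 s}\, ds$ is strictly increasing on $(0,\infty)$, and for every $y > 0$, $\mu\int_0^\infty \frac{e^{\lambda_1 s}}{e^{\lambda_1 s} - \theta^*(y)} e^{\lambda_0 s}\, ds > -\frac{\mu}{\lambda_0}$. -/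
/-! Write `Iₙ(θ) = ∫₀^∞ e^{λ₁ s} / (e^{λ₁ s} - θ)ⁿ e^{λ₀ s} ds`. For `n ≥ 1` the integrand is
dominated by `(1 - θ)⁻ⁿ e^{λ₀ s}` and strictly increasing in `θ ∈ [0, 1)`, so `Iₙ` is strictly
increasing on `[0, 1)`. The defining equation reads `I₂(θ*(y)) = e^{λ₁ y} / (λ₁ - λ₀)`, which is
strictly increasing in `y`; hence so are `θ*` and `μ I₁(θ*(y))`. Finally `μ I₁(0) = -μ / λ₀`. -/

open Real MeasureTheory Set

lemma setIntegral_lt_setIntegral_of_forall_lt {X : Type*} [MeasurableSpace X] {μ : Measure X}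
    {s : Set X} {f g : X → ℝ} (hs : MeasurableSet s) (hμs : μ s ≠ 0)
    (hf : IntegrableOn f s μ) (hg : IntegrableOn g s μ) (hlt : ∀ x ∈ s, f x < g x) :
    ∫ x in s, f x ∂μ < ∫ x in s, g x ∂μ := by
  have hpos : ∀ x ∈ s, 0 < g x - f x := fun x hx => sub_pos.2 (hlt x hx)
  rw [← sub_pos, ← integral_sub hg hf, setIntegral_pos_iff_support_of_nonneg_ae
    ((ae_restrict_iff' hs).2 (ae_of_all _ fun x hx => (hpos x hx).le)) (hg.sub hf),
    inter_eq_right.2 fun x hx => Function.mem_support.2 (hpos x hx).ne']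
  exact pos_iff_ne_zero.2 hμs

section Ratio

variable {x θ θ' : ℝ} {n : ℕ}

lemma div_sub_pow_le_inv_one_sub_pow (hx : 1 ≤ x) (hθ₀ : 0 ≤ θ) (hθ₁ : θ < 1) (hn : n ≠ 0) :
    x / (x - θ) ^ n ≤ ((1 - θ) ^ n)⁻¹ := by
  have h1θ : 0 < 1 - θ := sub_pos.2 hθ₁
  have hden : (1 - θ) * x ≤ x - θ := by nlinarith
  rw [div_le_iff₀ (pow_pos (by nlinarith) n), inv_mul_eq_div, le_div_iff₀ (pow_pos h1θ n)]
  calc x * (1 - θ) ^ n ≤ x ^ n * (1 - θ) ^ n := by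
        gcongr
        exact le_self_pow₀ hx hn
    _ = ((1 - θ) * x) ^ n := by rw [mul_pow, mul_comm]
    _ ≤ (x - θ) ^ n := by gcongr

lemma div_sub_pow_lt_div_sub_pow (hx : 0 < x) (hθ : θ < θ') (hθ' : θ' < x) (hn : n ≠ 0) :
    x / (x - θ) ^ n < x / (x - θ') ^ n := by
  have hθ'x : 0 < x - θ' := sub_pos.2 hθ'
  gcongr

end Ratio

section ExpRatioIntegral

variable {lam0 lam1 θ : ℝ} {n : ℕ}

noncomputable def expRatioIntegral (lam0 lam1 : ℝ) (n : ℕ) (θ : ℝ) : ℝ :=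
  ∫ s in Ioi 0, exp (lam1 * s) / (exp (lam1 * s) - θ) ^ n * exp (lam0 * s)

lemma integrableOn_exp_div_sub_pow_mul_exp (hlam0 : lam0 < 0) (hlam1 : 0 ≤ lam1) (hθ₀ : 0 ≤ θ)
    (hθ₁ : θ < 1) (hn : n ≠ 0) :
    IntegrableOn (fun s => exp (lam1 * s) / (exp (lam1 * s) - θ) ^ n * exp (lam0 * s))
      (Ioi 0) := by
  refine Integrable.mono' ((integrableOn_exp_mul_Ioi hlam0 0).const_mul ((1 - θ) ^ n)⁻¹)
    (by fun_prop : Measurable _).aestronglyMeasurable ?_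
  filter_upwards [ae_restrict_mem measurableSet_Ioi] with s hs
  have hexp : 1 ≤ exp (lam1 * s) := one_le_exp (mul_nonneg hlam1 (le_of_lt hs))
  have hden : 0 < exp (lam1 * s) - θ := by linarith
  rw [Real.norm_of_nonneg (by positivity)]
  gcongr
  exact div_sub_pow_le_inv_one_sub_pow hexp hθ₀ hθ₁ hn

lemma expRatioIntegral_strictMonoOn (hlam0 : lam0 < 0) (hlam1 : 0 ≤ lam1) (hn : n ≠ 0) :
    StrictMonoOn (expRatioIntegral lam0 lam1 n) (Ico 0 1) := by
  rintro θ ⟨hθ₀, -⟩ θ' ⟨-, hθ'₁⟩ hθθ'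
  refine setIntegral_lt_setIntegral_of_forall_lt measurableSet_Ioi (by simp)
    (integrableOn_exp_div_sub_pow_mul_exp hlam0 hlam1 hθ₀ (hθθ'.trans hθ'₁) hn)
    (integrableOn_exp_div_sub_pow_mul_exp hlam0 hlam1 (hθ₀.trans hθθ'.le) hθ'₁ hn) ?_
  intro s hs
  have hexp : 1 ≤ exp (lam1 * s) := one_le_exp (mul_nonneg hlam1 (le_of_lt hs))
  gcongr ?_ * _
  exact div_sub_pow_lt_div_sub_pow (exp_pos _) hθθ' (by linarith) hn

lemma expRatioIntegral_one (lam0 lam1 θ : ℝ) :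
    expRatioIntegral lam0 lam1 1 θ =
      ∫ s in Ioi 0, exp (lam1 * s) / (exp (lam1 * s) - θ) * exp (lam0 * s) := by
  simp only [expRatioIntegral, pow_one]

lemma expRatioIntegral_one_zero (hlam0 : lam0 < 0) (lam1 : ℝ) :
    expRatioIntegral lam0 lam1 1 0 = -lam0⁻¹ := by
  simp only [expRatioIntegral, pow_one, sub_zero, div_self (exp_ne_zero _), one_mul,
    integral_exp_mul_Ioi hlam0, mul_zero, exp_zero, neg_div, one_div]

end ExpRatioIntegral

/-- If `θ*(y) ∈ (0,1)` solves the defining equation for each `y > 0`, then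
`y ↦ μ ∫₀^∞ e^{λ₁ s}/(e^{λ₁ s}-θ*(y)) e^{λ₀ s} ds` is strictly increasing on `(0,∞)`
and always exceeds `-μ/λ₀`. -/
theorem stmt_7 (lam0 lam1 mu : ℝ) (hlam0 : lam0 < 0) (hlam1 : 0 < lam1) (hmu : 0 < mu)
    (thetaStar : ℝ → ℝ)
    (hth : ∀ y : ℝ, 0 < y → thetaStar y ∈ Set.Ioo (0:ℝ) 1 ∧
      Real.exp (lam1 * y) / (lam1 - lam0) =
        ∫ s in Set.Ioi (0:ℝ),
          Real.exp (lam1 * s) / (Real.exp (lam1 * s) - thetaStar y) ^ 2 *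
            Real.exp (lam0 * s)) :
    StrictMonoOn (fun y : ℝ =>
        mu * ∫ s in Set.Ioi (0:ℝ),
          Real.exp (lam1 * s) / (Real.exp (lam1 * s) - thetaStar y) * Real.exp (lam0 * s))
      (Set.Ioi 0) ∧
    ∀ y : ℝ, 0 < y →
      -(mu / lam0) <
        mu * ∫ s in Set.Ioi (0:ℝ),
          Real.exp (lam1 * s) / (Real.exp (lam1 * s) - thetaStar y) * Real.exp (lam0 * s) := by
  simp only [← expRatioIntegral_one]
  have hI₁ := expRatioIntegral_strictMonoOn hlam0 hlam1.le one_ne_zero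
  have hI₂ := expRatioIntegral_strictMonoOn hlam0 hlam1.le two_ne_zero
  have hθ_mem : ∀ y, 0 < y → thetaStar y ∈ Ico 0 1 := fun y hy =>
    Ioo_subset_Ico_self (hth y hy).1
  have hθ_mono : StrictMonoOn thetaStar (Ioi 0) := by
    intro y hy y' hy' hyy'
    rw [← hI₂.lt_iff_lt (hθ_mem y hy) (hθ_mem y' hy'), expRatioIntegral, expRatioIntegral,
      ← (hth y hy).2, ← (hth y' hy').2]
    exact div_lt_div_of_pos_right (exp_lt_exp.2 (mul_lt_mul_of_pos_left hyy' hlam1))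
      (by linarith)
  refine ⟨fun y hy y' hy' hyy' => ?_, fun y hy => ?_⟩
  · exact mul_lt_mul_of_pos_left (hI₁ (hθ_mem y hy) (hθ_mem y' hy') (hθ_mono hy hy' hyy')) hmu
  · have hI₁_zero := hI₁ ⟨le_rfl, zero_lt_one⟩ (hθ_mem y hy) (hth y hy).1.1
    rw [expRatioIntegral_one_zero hlam0] at hI₁_zero
    calc -(mu / lam0) = mu * -lam0⁻¹ := by ring
      _ < _ := mul_lt_mul_of_pos_left hI₁_zero hmu
end

section
/- Let clones be generated on $(0,\zeta_n)$ by a Poisson process of intensity $\mu n^{1-\alpha} e^{\lambda_0 s}$, each clone at birth starting an independent Yule process with rate $\lambda_1$, and let $X_{i,n}$ be the size at time $\zeta_n$ of the $i$-th clone, where $\zeta_n$ satisfies $z_1^n(\zeta_n) = n$. Define $\tilde R_n = \sum_{i=1}^{I_n(\zeta_n)} (X_{i,n}/n)^2$. Then $\lim_{n\to\infty} n^{1-\alpha}\,\mathbb{E}[\tilde R_n] = \frac{2(\lambda_1-\lambda_0)^2}{\mu(2\lambda_1 - \lambda_0)}$. -/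
set_option maxHeartbeats 1000000


open Real Filter MeasureTheory

private lemma int_exp_mul (c : ℝ) (hc : c ≠ 0) (b : ℝ) :
    ∫ s in (0:ℝ)..b, Real.exp (c * s) = (Real.exp (c * b) - 1) / c := by
  rw [intervalIntegral.integral_comp_mul_left (fun x => Real.exp x) hc]
  simp [integral_exp, smul_eq_mul]
  ring

/-- `limₙ n^{1-α} E[R̃ₙ] = 2(λ₁-λ₀)²/(μ(2λ₁-λ₀))`, where
`E[R̃ₙ] = n^{-2} ∫₀^{ζₙ} μ n^{1-α} e^{λ₀ s} (2e^{2λ₁(ζₙ-s)} - e^{λ₁(ζₙ-s)}) ds`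
by the compound Poisson formula, and `ζₙ` solves `z₁ⁿ(ζₙ) = n`. -/
theorem stmt_10 (lam0 lam1 mu alpha : ℝ) (hlam0 : lam0 < 0) (hlam1 : 0 < lam1)
    (hmu : 0 < mu) (halpha : alpha ∈ Set.Ioo (0:ℝ) 1) (zeta : ℕ → ℝ)
    (hzeta : ∀ n : ℕ, 1 ≤ n →
      mu / (lam1 - lam0) * (n : ℝ) ^ ((1:ℝ) - alpha) * Real.exp (lam1 * zeta n) *
        (1 - Real.exp ((lam0 - lam1) * zeta n)) = (n : ℝ)) :
    Tendsto (fun n : ℕ =>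
        (n : ℝ) ^ ((1:ℝ) - alpha) *
          ((1 / (n : ℝ) ^ (2:ℝ)) *
            ∫ s in (0:ℝ)..(zeta n),
              mu * (n : ℝ) ^ ((1:ℝ) - alpha) * Real.exp (lam0 * s) *
                (2 * Real.exp (2 * lam1 * (zeta n - s)) - Real.exp (lam1 * (zeta n - s)))))
      atTop (nhds (2 * (lam1 - lam0) ^ 2 / (mu * (2 * lam1 - lam0)))) := by
  obtain ⟨ha0, ha1⟩ := halpha
  have hl10 : 0 < lam1 - lam0 := by linarith
  have hl20 : 0 < 2 * lam1 - lam0 := by linarith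
  set A := 2 * (lam1 - lam0) ^ 2 / (mu * (2 * lam1 - lam0)) with hA
  -- positivity of zeta n for n ≥ 1
  have hzpos : ∀ n : ℕ, 1 ≤ n → 0 < zeta n := by
    intro n hn
    by_contra h
    push_neg at h
    have hz := hzeta n hn
    have hu : (1:ℝ) ≤ Real.exp ((lam0 - lam1) * zeta n) := by
      rw [← Real.exp_zero]
      apply Real.exp_le_exp.2
      nlinarith
    have hN : (0:ℝ) < (n : ℝ) ^ ((1:ℝ) - alpha) := by
      apply Real.rpow_pos_of_pos
      exact_mod_cast hn
    have hE : (0:ℝ) < Real.exp (lam1 * zeta n) := Real.exp_pos _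
    have hn1 : (1:ℝ) ≤ (n : ℝ) := by exact_mod_cast hn
    have hK : (0:ℝ) < mu / (lam1 - lam0) := by positivity
    nlinarith [mul_pos (mul_pos hK hN) hE]
  -- zeta tends to infinity
  have hztop : Tendsto zeta atTop atTop := by
    have hEtop : Tendsto (fun n : ℕ => Real.exp (lam1 * zeta n)) atTop atTop := by
      apply tendsto_atTop_mono' _ _
        (((tendsto_rpow_atTop ha0).comp (tendsto_natCast_atTop_atTop (R := ℝ))).const_mul_atTop
          (by positivity : (0:ℝ) < (lam1 - lam0) / mu))
      filter_upwards [eventually_ge_atTop 1] with n hn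
      have hz := hzeta n hn
      have hnpos : (0:ℝ) < (n : ℝ) := by exact_mod_cast hn
      have hN : (0:ℝ) < (n : ℝ) ^ ((1:ℝ) - alpha) := Real.rpow_pos_of_pos hnpos _
      have hE : (0:ℝ) < Real.exp (lam1 * zeta n) := Real.exp_pos _
      have hu1 : Real.exp ((lam0 - lam1) * zeta n) < 1 := by
        rw [← Real.exp_zero]
        apply Real.exp_lt_exp.2
        have := hzpos n hn
        nlinarith
      have hu0 : 0 < Real.exp ((lam0 - lam1) * zeta n) := Real.exp_pos _
      have hle : mu / (lam1 - lam0) * (n : ℝ) ^ ((1:ℝ) - alpha) * Real.exp (lam1 * zeta n)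
          * 1 ≥ (n:ℝ) := by nlinarith [mul_pos (mul_pos (by positivity : (0:ℝ) < mu / (lam1 - lam0)) hN) hE]
      have hNα : (n : ℝ) ^ ((1:ℝ) - alpha) * (n : ℝ) ^ alpha = (n : ℝ) := by
        rw [← Real.rpow_add hnpos]; simp
      show (lam1 - lam0) / mu * ((n:ℝ) ^ alpha) ≤ Real.exp (lam1 * zeta n)
      rw [mul_one] at hle
      rw [ge_iff_le, div_mul_eq_mul_div, div_mul_eq_mul_div, le_div_iff₀ hl10] at hle
      rw [div_mul_eq_mul_div, div_le_iff₀ hmu]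
      nlinarith [Real.rpow_pos_of_pos hnpos alpha]
    have h1 : Tendsto (fun n : ℕ => lam1 * zeta n) atTop atTop := by
      rw [tendsto_atTop]
      intro b
      filter_upwards [(tendsto_atTop.1 hEtop) (Real.exp b)] with n hn
      exact Real.exp_le_exp.1 hn
    have := (tendsto_const_mul_atTop_of_pos hlam1).1 h1
    exact this
  -- limits of the exponential pieces
  have hu : Tendsto (fun n : ℕ => Real.exp ((lam0 - lam1) * zeta n)) atTop (nhds 0) :=
    Real.tendsto_exp_atBot.comp ((tendsto_const_mul_atBot_of_neg (by linarith)).2 hztop)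
  have hv : Tendsto (fun n : ℕ => Real.exp ((lam0 - 2 * lam1) * zeta n)) atTop (nhds 0) :=
    Real.tendsto_exp_atBot.comp ((tendsto_const_mul_atBot_of_neg (by linarith)).2 hztop)
  have hw : Tendsto (fun n : ℕ => (n : ℝ) ^ ((1:ℝ) - alpha) / (n : ℝ)) atTop (nhds 0) := by
    apply Tendsto.congr' _ ((tendsto_rpow_neg_atTop ha0).comp (tendsto_natCast_atTop_atTop (R := ℝ)))
    filter_upwards [eventually_ge_atTop 1] with n hn
    have hnpos : (0:ℝ) < (n : ℝ) := by exact_mod_cast hn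
    show (n:ℝ) ^ (-alpha) = _
    rw [show (-alpha) = ((1:ℝ) - alpha) - 1 by ring, Real.rpow_sub hnpos, Real.rpow_one]
  -- the key identity
  have key : ∀ᶠ n : ℕ in atTop,
      (n : ℝ) ^ ((1:ℝ) - alpha) *
          ((1 / (n : ℝ) ^ (2:ℝ)) *
            ∫ s in (0:ℝ)..(zeta n),
              mu * (n : ℝ) ^ ((1:ℝ) - alpha) * Real.exp (lam0 * s) *
                (2 * Real.exp (2 * lam1 * (zeta n - s)) - Real.exp (lam1 * (zeta n - s))))
        = A * (1 - Real.exp ((lam0 - 2 * lam1) * zeta n)) /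
            (1 - Real.exp ((lam0 - lam1) * zeta n)) ^ 2
          - (n : ℝ) ^ ((1:ℝ) - alpha) / (n : ℝ) := by
    filter_upwards [eventually_ge_atTop 1] with n hn
    have hnpos : (0:ℝ) < (n : ℝ) := by exact_mod_cast hn
    set z := zeta n with hzdef
    set N := (n : ℝ) ^ ((1:ℝ) - alpha) with hNdef
    have hN : 0 < N := Real.rpow_pos_of_pos hnpos _
    set E := Real.exp (lam1 * z) with hEdef
    set u := Real.exp ((lam0 - lam1) * z) with hudef
    set v := Real.exp ((lam0 - 2 * lam1) * z) with hvdef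
    have hE : 0 < E := Real.exp_pos _
    have hu1 : u < 1 := by
      rw [hudef, ← Real.exp_zero]
      apply Real.exp_lt_exp.2
      have := hzpos n hn
      nlinarith
    have hz := hzeta n hn
    rw [← hNdef, ← hEdef, ← hudef] at hz
    -- compute the integral
    have hint : (∫ s in (0:ℝ)..z,
          mu * N * Real.exp (lam0 * s) *
            (2 * Real.exp (2 * lam1 * (z - s)) - Real.exp (lam1 * (z - s))))
        = 2 * mu * N * (E * E) * ((v - 1) / (lam0 - 2 * lam1))
          - mu * N * E * ((u - 1) / (lam0 - lam1)) := by
      have hc1 : (lam0 - 2 * lam1) ≠ 0 := by linarith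
      have hc2 : (lam0 - lam1) ≠ 0 := by linarith
      rw [intervalIntegral.integral_congr
        (g := fun s => (2 * mu * N * (E * E)) * Real.exp ((lam0 - 2 * lam1) * s)
          - (mu * N * E) * Real.exp ((lam0 - lam1) * s))]
      · have hi1 : IntervalIntegrable
            (fun s : ℝ => 2 * mu * N * (E * E) * Real.exp ((lam0 - 2 * lam1) * s)) volume 0 z :=
          (by continuity : Continuous fun s : ℝ =>
            2 * mu * N * (E * E) * Real.exp ((lam0 - 2 * lam1) * s)).intervalIntegrable 0 z
        have hi2 : IntervalIntegrable
            (fun s : ℝ => mu * N * E * Real.exp ((lam0 - lam1) * s)) volume 0 z :=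
          (by continuity : Continuous fun s : ℝ =>
            mu * N * E * Real.exp ((lam0 - lam1) * s)).intervalIntegrable 0 z
        rw [intervalIntegral.integral_sub hi1 hi2,
          intervalIntegral.integral_const_mul, intervalIntegral.integral_const_mul,
          int_exp_mul _ hc1, int_exp_mul _ hc2]
      · intro s _
        simp only
        have h1 : Real.exp (lam0 * s) * Real.exp (2 * lam1 * (z - s))
            = (E * E) * Real.exp ((lam0 - 2 * lam1) * s) := by
          rw [hEdef, ← Real.exp_add, ← Real.exp_add, ← Real.exp_add]
          congr 1; ring
        have h2 : Real.exp (lam0 * s) * Real.exp (lam1 * (z - s))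
            = E * Real.exp ((lam0 - lam1) * s) := by
          rw [hEdef, ← Real.exp_add, ← Real.exp_add]
          congr 1; ring
        linear_combination (2 * mu * N) * h1 - (mu * N) * h2
    rw [hint]
    -- algebra using the constraint
    have hu1' : (0:ℝ) < 1 - u := by linarith
    have hEeq : E = (n : ℝ) * (lam1 - lam0) / (mu * N * (1 - u)) := by
      field_simp at hz ⊢
      nlinarith [hz]
    have hn2 : (n : ℝ) ^ (2:ℝ) = (n : ℝ) * (n : ℝ) := by
      rw [show (2:ℝ) = ((2:ℕ):ℝ) by norm_num, Real.rpow_natCast]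
      ring
    rw [hEeq, hn2, hA]
    have hmu' : mu ≠ 0 := ne_of_gt hmu
    have hN' : N ≠ 0 := ne_of_gt hN
    have hn' : (n:ℝ) ≠ 0 := ne_of_gt hnpos
    have hu' : (1:ℝ) - u ≠ 0 := ne_of_gt hu1'
    have h1 : lam0 - 2 * lam1 ≠ 0 := by linarith
    have h2 : lam0 - lam1 ≠ 0 := by linarith
    have h3 : 2 * lam1 - lam0 ≠ 0 := by linarith
    field_simp
    ring
  rw [tendsto_congr' key]
  have hfin : Tendsto (fun n : ℕ =>
      A * (1 - Real.exp ((lam0 - 2 * lam1) * zeta n)) /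
        (1 - Real.exp ((lam0 - lam1) * zeta n)) ^ 2
      - (n : ℝ) ^ ((1:ℝ) - alpha) / (n : ℝ)) atTop
      (nhds (A * (1 - 0) / (1 - 0) ^ 2 - 0)) := by
    exact (((tendsto_const_nhds.mul (tendsto_const_nhds.sub hv)).div
      ((tendsto_const_nhds.sub hu).pow 2) (by norm_num)).sub hw)
  simpa using hfin
end

section
/- Fix $\lambda_0 < 0 < \lambda_1$. For $\theta \in [0,1)$ define $\Lambda(\theta) = \log\left(-\lambda_0 \int_0^\infty \frac{e^{\lambda_0 t}}{1 - \theta e^{-\lambda_1 t}}\, dt\right)$. Then $\Lambda$ is differentiable on $(0,1)$ with $\Lambda'(\theta) = \frac{\int_0^\infty e^{\lambda_0 t}\frac{e^{-\lambda_1 t}}{(1-\theta e^{-\lambda_1 t})^2} dt}{\int_0^\infty e^{\lambda_0 t}\frac{1}{1-\theta e^{-\lambda_1 t}} dt}$, and $\Lambda'$ is strictly increasing on $(0,1)$ with $\lim_{\theta \uparrow 1} \Lambda'(\theta) = \infty$. -/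
open Real Filter MeasureTheory

/-!
Put `K_n(θ, t) = e^{λ₀ t} uⁿ / (1 - θu)ⁿ⁺¹` with `u = e^{-λ₁ t} ∈ (0, 1]` and `I_n = ∫ K_n`.
Differentiating under the integral sign gives `I_n' = (n + 1) I_{n+1}`, so `Λ' = I₁ / I₀`.
Since `K_{n+1}² = K_n K_{n+2}` pointwise, Cauchy–Schwarz gives `I₁² ≤ I₀ I₂`, hence
`(I₁ / I₀)' = (2 I₂ I₀ - I₁²) / I₀² > 0`. Comparing with the integral over `[0, 1]`,
`I₀(θ) ≳ log (1 / (1 - θ))`, so `Λ → ∞` as `θ ↑ 1`; a convex function that tends to `∞` at the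
right end of an interval has derivative tending to `∞` there.
-/

open Set Topology

noncomputable def resolventKernel {α : Type*} (w u : α → ℝ) (n : ℕ) (θ : ℝ) (a : α) : ℝ :=
  w a * u a ^ n / (1 - θ * u a) ^ (n + 1)

noncomputable def resolventMoment {α : Type*} [MeasurableSpace α] (μ : Measure α) (w u : α → ℝ)
    (n : ℕ) (θ : ℝ) : ℝ :=
  ∫ a, resolventKernel w u n θ a ∂μ

lemma one_sub_abs_le_one_sub_mul {x v : ℝ} (hv : v ∈ Icc (0 : ℝ) 1) : 1 - |x| ≤ 1 - x * v := by
  nlinarith [mul_le_mul (le_abs_self x) hv.2 hv.1 (abs_nonneg x)]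

lemma norm_div_one_sub_mul_pow_le {c v x b : ℝ} (n : ℕ) (hv : v ∈ Icc (0 : ℝ) 1) (hxb : |x| ≤ b)
    (hb : b < 1) : ‖c * v ^ n / (1 - x * v) ^ (n + 1)‖ ≤ ‖c‖ / (1 - b) ^ (n + 1) := by
  have hden : 1 - b ≤ 1 - x * v := by linarith [one_sub_abs_le_one_sub_mul (x := x) hv]
  have hvn : |v| ^ n ≤ 1 := pow_le_one₀ (abs_nonneg v) (abs_le.2 ⟨by linarith [hv.1], hv.2⟩)
  rw [norm_div, norm_mul, norm_pow, norm_pow, Real.norm_of_nonneg (by linarith : 0 ≤ 1 - x * v),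
    Real.norm_eq_abs, Real.norm_eq_abs]
  calc |c| * |v| ^ n / (1 - x * v) ^ (n + 1) ≤ |c| * 1 / (1 - b) ^ (n + 1) := by
        gcongr
    _ = |c| / (1 - b) ^ (n + 1) := by rw [mul_one]

lemma hasDerivAt_div_one_sub_mul_pow (c v : ℝ) (n : ℕ) {θ : ℝ} (h : 1 - θ * v ≠ 0) :
    HasDerivAt (fun x => c * v ^ n / (1 - x * v) ^ (n + 1))
      ((n + 1) * (c * v ^ (n + 1) / (1 - θ * v) ^ (n + 2))) θ := by
  have hden : HasDerivAt (fun x => (1 - x * v) ^ (n + 1))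
      ((n + 1 : ℕ) * (1 - θ * v) ^ n * -v) θ := by
    simpa using (((hasDerivAt_id θ).mul_const v).const_sub 1).fun_pow (n + 1)
  refine ((hasDerivAt_const θ (c * v ^ n)).fun_div hden (pow_ne_zero _ h)).congr_deriv ?_
  field_simp
  push_cast
  ring

lemma integral_pos_of_ae_pos {α : Type*} [MeasurableSpace α] {μ : Measure α} [NeZero μ]
    {f : α → ℝ} (hf : Integrable f μ) (hpos : ∀ᵐ a ∂μ, 0 < f a) : 0 < ∫ a, f a ∂μ := by
  rw [integral_pos_iff_support_of_nonneg_ae (hpos.mono fun _ ha => ha.le) hf]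
  have hsupp : Function.support f =ᵐ[μ] (univ : Set α) :=
    ae_eq_univ.2 (ae_iff.1 (hpos.mono fun _ ha => ha.ne'))
  rw [measure_congr hsupp]
  exact Measure.measure_univ_pos.2 (NeZero.ne μ)

section ResolventMoment

variable {α : Type*} [MeasurableSpace α] {μ : Measure α} {w u : α → ℝ}

lemma aestronglyMeasurable_resolventKernel (hw : AEStronglyMeasurable w μ)
    (hu : AEStronglyMeasurable u μ) (n : ℕ) (θ : ℝ) :
    AEStronglyMeasurable (resolventKernel w u n θ) μ := by
  have := hw.aemeasurable
  have := hu.aemeasurable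
  exact (by unfold resolventKernel; fun_prop : AEMeasurable _ μ).aestronglyMeasurable

lemma integrable_resolventKernel (hw : Integrable w μ) (hu : AEStronglyMeasurable u μ)
    (hu01 : ∀ᵐ a ∂μ, u a ∈ Icc (0 : ℝ) 1) (n : ℕ) {θ : ℝ} (hθ : |θ| < 1) :
    Integrable (resolventKernel w u n θ) μ :=
  (hw.norm.div_const _).mono' (aestronglyMeasurable_resolventKernel hw.1 hu n θ)
    (hu01.mono fun _ ha => norm_div_one_sub_mul_pow_le n ha le_rfl hθ)

lemma hasDerivAt_resolventMoment (hw : Integrable w μ) (hu : AEStronglyMeasurable u μ)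
    (hu01 : ∀ᵐ a ∂μ, u a ∈ Icc (0 : ℝ) 1) (n : ℕ) {θ : ℝ} (hθ : |θ| < 1) :
    HasDerivAt (resolventMoment μ w u n) ((n + 1) * resolventMoment μ w u (n + 1) θ) θ := by
  set b := (1 + |θ|) / 2 with hb_def
  have hb : b < 1 := by linarith
  have hr : 0 < (1 - |θ|) / 2 := by linarith
  have hball : ∀ x ∈ Metric.ball θ ((1 - |θ|) / 2), |x| ≤ b := fun x hx => by
    have := abs_sub_abs_le_abs_sub x θ
    rw [Metric.mem_ball, Real.dist_eq] at hx
    linarith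
  have hdom := hasDerivAt_integral_of_dominated_loc_of_deriv_le
    (F := resolventKernel w u n)
    (F' := fun x a => (n + 1) * resolventKernel w u (n + 1) x a)
    (bound := fun a => (n + 1) * (‖w a‖ / (1 - b) ^ (n + 2)))
    (Metric.ball_mem_nhds θ hr)
    (Eventually.of_forall fun x => aestronglyMeasurable_resolventKernel hw.1 hu n x)
    (integrable_resolventKernel hw hu hu01 n hθ)
    ((aestronglyMeasurable_resolventKernel hw.1 hu (n + 1) θ).const_mul _)
    (hu01.mono fun a ha x hx => by
      rw [norm_mul, Real.norm_of_nonneg (by positivity)]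
      gcongr
      exact norm_div_one_sub_mul_pow_le (n + 1) ha (hball x hx) hb)
    ((hw.norm.div_const _).const_mul _)
    (hu01.mono fun a ha x hx => hasDerivAt_div_one_sub_mul_pow (w a) (u a) n
      (by linarith [one_sub_abs_le_one_sub_mul (x := x) ha, hball x hx]))
  rw [resolventMoment, ← integral_const_mul]
  exact hdom.2

lemma resolventMoment_pos [NeZero μ] (hw : Integrable w μ) (hw0 : ∀ᵐ a ∂μ, 0 < w a)
    (hu : AEStronglyMeasurable u μ) (hu01 : ∀ᵐ a ∂μ, u a ∈ Ioc (0 : ℝ) 1) (n : ℕ) {θ : ℝ}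
    (hθ : |θ| < 1) : 0 < resolventMoment μ w u n θ :=
  integral_pos_of_ae_pos
    (integrable_resolventKernel hw hu (hu01.mono fun _ h => Ioc_subset_Icc_self h) n hθ)
    ((hw0.and hu01).mono fun _ ⟨hwa, hua⟩ => div_pos (mul_pos hwa (pow_pos hua.1 n))
      (pow_pos (by linarith [one_sub_abs_le_one_sub_mul (x := θ) (Ioc_subset_Icc_self hua)]) _))

lemma sq_resolventMoment_le (hw : Integrable w μ) (hw0 : ∀ᵐ a ∂μ, 0 ≤ w a)
    (hu : AEStronglyMeasurable u μ) (hu01 : ∀ᵐ a ∂μ, u a ∈ Icc (0 : ℝ) 1) (n : ℕ) {θ : ℝ}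
    (hθ : |θ| < 1) (hR : 0 < resolventMoment μ w u n θ) :
    resolventMoment μ w u (n + 1) θ ^ 2 ≤
      resolventMoment μ w u n θ * resolventMoment μ w u (n + 2) θ := by
  set A := resolventMoment μ w u n θ
  set B := resolventMoment μ w u (n + 1) θ
  set C := resolventMoment μ w u (n + 2) θ
  have hint := fun m => integrable_resolventKernel hw hu hu01 m hθ
  -- `K_{n+1} = K_n v` and `K_{n+2} = K_n v²` with `v = u / (1 - θu)`
  have hexpand : ∀ᵐ a ∂μ,
      resolventKernel w u n θ a * (B - A * (u a / (1 - θ * u a))) ^ 2 =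
        B ^ 2 * resolventKernel w u n θ a - 2 * A * B * resolventKernel w u (n + 1) θ a +
          A ^ 2 * resolventKernel w u (n + 2) θ a :=
    hu01.mono fun a ha => by
      have : 1 - θ * u a ≠ 0 := by linarith [one_sub_abs_le_one_sub_mul (x := θ) ha]
      simp only [resolventKernel]
      field_simp
      ring
  have hnonneg : 0 ≤ ∫ a, resolventKernel w u n θ a * (B - A * (u a / (1 - θ * u a))) ^ 2 ∂μ :=
    integral_nonneg_of_ae <| (hw0.and hu01).mono fun a ⟨hwa, hua⟩ => mul_nonneg
      (div_nonneg (mul_nonneg hwa (pow_nonneg hua.1 n))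
        (pow_nonneg (by linarith [one_sub_abs_le_one_sub_mul (x := θ) hua]) _)) (sq_nonneg _)
  rw [integral_congr_ae hexpand, integral_add, integral_sub, integral_const_mul,
    integral_const_mul, integral_const_mul] at hnonneg
  · change 0 ≤ B ^ 2 * A - 2 * A * B * B + A ^ 2 * C at hnonneg
    nlinarith
  all_goals first
    | exact (hint _).const_mul _
    | exact ((hint _).const_mul _).sub ((hint _).const_mul _)

lemma strictMonoOn_resolventMoment_div [NeZero μ] (hw : Integrable w μ)
    (hw0 : ∀ᵐ a ∂μ, 0 < w a) (hu : AEStronglyMeasurable u μ)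
    (hu01 : ∀ᵐ a ∂μ, u a ∈ Ioc (0 : ℝ) 1) (n : ℕ) :
    StrictMonoOn (fun θ => resolventMoment μ w u (n + 1) θ / resolventMoment μ w u n θ)
      (Ioo (-1) 1) := by
  have hu01' : ∀ᵐ a ∂μ, u a ∈ Icc (0 : ℝ) 1 := hu01.mono fun _ h => Ioc_subset_Icc_self h
  have hpos := resolventMoment_pos hw hw0 hu hu01
  have hderiv : ∀ θ ∈ Ioo (-1 : ℝ) 1, HasDerivAt _ _ θ := fun θ hθ =>
    (hasDerivAt_resolventMoment hw hu hu01' (n + 1) (abs_lt.2 hθ)).fun_div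
      (hasDerivAt_resolventMoment hw hu hu01' n (abs_lt.2 hθ)) (hpos n (abs_lt.2 hθ)).ne'
  refine strictMonoOn_of_deriv_pos (convex_Ioo _ _)
    (fun θ hθ => (hderiv θ hθ).continuousAt.continuousWithinAt) fun θ hθ => ?_
  rw [interior_Ioo] at hθ
  rw [(hderiv θ hθ).deriv]
  have hθ' := abs_lt.2 hθ
  have hA := hpos n hθ'
  have hC := hpos (n + 2) hθ'
  have hCS := sq_resolventMoment_le hw (hw0.mono fun _ h => h.le) hu hu01' n hθ' hA
  push_cast
  apply div_pos _ (pow_pos hA 2)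
  nlinarith [mul_pos hA hC, (n.cast_nonneg : (0 : ℝ) ≤ n)]

end ResolventMoment

theorem tendsto_atTop_of_hasDerivAt_of_monotoneOn {f f' : ℝ → ℝ} {a b : ℝ} (hab : a < b)
    (hf : ∀ x ∈ Ioo a b, HasDerivAt f (f' x) x) (hf' : MonotoneOn f' (Ioo a b))
    (hlim : Tendsto f (𝓝[<] b) atTop) : Tendsto f' (𝓝[<] b) atTop := by
  obtain ⟨c, hc⟩ := nonempty_Ioo.2 hab
  have hconv : ConvexOn ℝ (Ioo a b) f := by
    refine MonotoneOn.convexOn_of_deriv (convex_Ioo a b)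
      (fun x hx => (hf x hx).continuousAt.continuousWithinAt) ?_ ?_ <;> rw [interior_Ioo]
    · exact fun x hx => (hf x hx).differentiableAt.differentiableWithinAt
    · exact hf'.congr fun x hx => ((hf x hx).deriv).symm
  have hlow : Tendsto (fun x => (f x - f c) / (b - c)) (𝓝[<] b) atTop :=
    (tendsto_atTop_add_const_right _ _ hlim).atTop_div_const (by linarith [hc.2])
  refine tendsto_atTop_mono' _ ?_ hlow
  filter_upwards [Ioo_mem_nhdsLT hc.2, hlim.eventually_ge_atTop (f c)] with x hx hfx
  have hx' : x ∈ Ioo a b := ⟨hc.1.trans hx.1, hx.2⟩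
  calc (f x - f c) / (b - c) ≤ (f x - f c) / (x - c) :=
        div_le_div_of_nonneg_left (by linarith) (by linarith [hx.1]) (by linarith [hx.2])
    _ = slope f c x := (slope_def_field f c x).symm
    _ ≤ f' x := hconv.slope_le_of_hasDerivAt hc hx' hx.1 (hf x hx')

section ExponentialKernel

variable {lam0 lam1 : ℝ}

lemma ae_restrict_Ioi_exp_neg_mul_mem_Ioc (hlam1 : 0 ≤ lam1) :
    ∀ᵐ t ∂(volume.restrict (Ioi (0 : ℝ))), exp (-lam1 * t) ∈ Ioc (0 : ℝ) 1 :=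
  (ae_restrict_mem measurableSet_Ioi).mono fun t ht =>
    ⟨exp_pos _, exp_le_one_iff.2 (by nlinarith [mem_Ioi.1 ht])⟩

lemma exp_div_mul_log_le_integral (hlam0 : lam0 < 0) (hlam1 : 0 < lam1) {θ : ℝ} (hθ0 : 0 ≤ θ)
    (hθ1 : θ < 1)
    (hint : IntegrableOn (fun t => exp (lam0 * t) / (1 - θ * exp (-lam1 * t))) (Ioi 0)) :
    exp lam0 / lam1 * log ((lam1 + (1 - θ)) / (1 - θ)) ≤
      ∫ t in Ioi 0, exp (lam0 * t) / (1 - θ * exp (-lam1 * t)) := by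
  have hδ : 0 < 1 - θ := by linarith
  -- on `[0, 1]`, `1 - θ e^{-λ₁t} ≤ (1 - θ) + λ₁t` because `e^{-x} ≥ 1 - x`
  have hpt : ∀ t ∈ Icc (0 : ℝ) 1,
      exp lam0 * (lam1 * t + (1 - θ))⁻¹ ≤ exp (lam0 * t) / (1 - θ * exp (-lam1 * t)) := by
    rintro t ⟨ht0, ht1⟩
    have hexp := add_one_le_exp (-lam1 * t)
    have hexp1 : exp (-lam1 * t) ≤ 1 := exp_le_one_iff.2 (by nlinarith)
    rw [← div_eq_mul_inv]
    apply div_le_div₀ (exp_pos _).le (exp_le_exp.2 (by nlinarith)) (by nlinarith)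
    nlinarith [mul_le_mul_of_nonneg_left hexp hθ0, mul_nonneg hlam1.le ht0]
  calc exp lam0 / lam1 * log ((lam1 + (1 - θ)) / (1 - θ))
      = ∫ t in (0 : ℝ)..1, exp lam0 * (lam1 * t + (1 - θ))⁻¹ := by
        rw [intervalIntegral.integral_const_mul,
          intervalIntegral.integral_comp_mul_add (fun x => x⁻¹) hlam1.ne',
          integral_inv_of_pos (by linarith) (by linarith)]
        simp only [mul_zero, mul_one, zero_add, smul_eq_mul]
        ring
    _ ≤ ∫ t in (0 : ℝ)..1, exp (lam0 * t) / (1 - θ * exp (-lam1 * t)) := by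
        refine intervalIntegral.integral_mono_on zero_le_one ?_ ?_ hpt
        · refine ContinuousOn.intervalIntegrable (continuousOn_const.mul (ContinuousOn.inv₀
            (by fun_prop) fun t ht => ?_))
          rw [uIcc_of_le zero_le_one] at ht
          nlinarith [ht.1]
        · exact (intervalIntegrable_iff_integrableOn_Ioc_of_le zero_le_one).2
            (hint.mono_set Ioc_subset_Ioi_self)
    _ = ∫ t in Ioc 0 1, exp (lam0 * t) / (1 - θ * exp (-lam1 * t)) :=
        intervalIntegral.integral_of_le zero_le_one
    _ ≤ ∫ t in Ioi 0, exp (lam0 * t) / (1 - θ * exp (-lam1 * t)) := by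
        refine setIntegral_mono_set hint ?_ Ioc_subset_Ioi_self.eventuallyLE
        filter_upwards [ae_restrict_Ioi_exp_neg_mul_mem_Ioc hlam1.le] with t ht
        exact div_nonneg (exp_pos _).le (by nlinarith [ht.1, ht.2])

lemma tendsto_resolventMoment_exp_atTop (hlam0 : lam0 < 0) (hlam1 : 0 < lam1) :
    Tendsto (resolventMoment (volume.restrict (Ioi 0)) (fun t => exp (lam0 * t))
      (fun t => exp (-lam1 * t)) 0) (𝓝[<] 1) atTop := by
  have hsub : Tendsto (fun θ : ℝ => 1 - θ) (𝓝[<] 1) (𝓝[>] 0) := by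
    have h := (Filter.map_subLeft_nhdsLT (c := (1 : ℝ)) (a := 1)).le
    rwa [sub_self] at h
  have hlog : Tendsto (fun θ => exp lam0 / lam1 * log (lam1 * (1 - θ)⁻¹)) (𝓝[<] 1) atTop :=
    (tendsto_log_atTop.comp ((tendsto_inv_nhdsGT_zero.comp hsub).const_mul_atTop hlam1)
      ).const_mul_atTop (by positivity)
  refine tendsto_atTop_mono' _ ?_ hlog
  filter_upwards [Ioo_mem_nhdsLT zero_lt_one] with θ hθ
  have hint := integrable_resolventKernel (integrableOn_exp_mul_Ioi hlam0 0)
    (by fun_prop) ((ae_restrict_Ioi_exp_neg_mul_mem_Ioc hlam1.le).mono fun _ h =>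
      Ioc_subset_Icc_self h) 0 (abs_lt.2 ⟨by linarith [hθ.1], hθ.2⟩)
  unfold resolventKernel at hint
  simp only [pow_zero, mul_one, zero_add, pow_one] at hint
  refine le_trans ?_ ((exp_div_mul_log_le_integral hlam0 hlam1 hθ.1.le hθ.2 hint).trans_eq
    (by simp [resolventMoment, resolventKernel]))
  have hδ : 0 < 1 - θ := by linarith [hθ.2]
  gcongr
  rw [← div_eq_mul_inv]
  gcongr
  linarith

end ExponentialKernel

/-- `Λ(θ) = log(-λ₀ ∫₀^∞ e^{λ₀ t}/(1-θe^{-λ₁ t}) dt)` is differentiable on `(0,1)` with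
derivative `Λ'(θ)` given by the stated ratio of integrals, `Λ'` is strictly increasing on
`(0,1)`, and `Λ'(θ) → ∞` as `θ ↑ 1`. -/
theorem stmt_14 (lam0 lam1 : ℝ) (hlam0 : lam0 < 0) (hlam1 : 0 < lam1) :
    (∀ theta ∈ Set.Ioo (0:ℝ) 1,
      HasDerivAt (fun x : ℝ =>
          Real.log (-lam0 * ∫ t in Set.Ioi (0:ℝ),
            Real.exp (lam0 * t) / (1 - x * Real.exp (-lam1 * t))))
        ((∫ t in Set.Ioi (0:ℝ),
            Real.exp (lam0 * t) * Real.exp (-lam1 * t) /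
              (1 - theta * Real.exp (-lam1 * t)) ^ 2) /
          (∫ t in Set.Ioi (0:ℝ),
            Real.exp (lam0 * t) / (1 - theta * Real.exp (-lam1 * t))))
        theta) ∧
    StrictMonoOn (fun theta : ℝ =>
        (∫ t in Set.Ioi (0:ℝ),
            Real.exp (lam0 * t) * Real.exp (-lam1 * t) /
              (1 - theta * Real.exp (-lam1 * t)) ^ 2) /
          (∫ t in Set.Ioi (0:ℝ),
            Real.exp (lam0 * t) / (1 - theta * Real.exp (-lam1 * t))))
      (Set.Ioo 0 1) ∧
    Tendsto (fun theta : ℝ =>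
        (∫ t in Set.Ioi (0:ℝ),
            Real.exp (lam0 * t) * Real.exp (-lam1 * t) /
              (1 - theta * Real.exp (-lam1 * t)) ^ 2) /
          (∫ t in Set.Ioi (0:ℝ),
            Real.exp (lam0 * t) / (1 - theta * Real.exp (-lam1 * t))))
      (nhdsWithin 1 (Set.Iio 1)) atTop := by
  set R := resolventMoment (volume.restrict (Ioi 0)) (fun t => exp (lam0 * t))
    (fun t => exp (-lam1 * t))
  have hR0 : ∀ x, ∫ t in Ioi 0, exp (lam0 * t) / (1 - x * exp (-lam1 * t)) = R 0 x := fun x => by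
    simp [R, resolventMoment, resolventKernel]
  have hR1 : ∀ x, ∫ t in Ioi 0, exp (lam0 * t) * exp (-lam1 * t) / (1 - x * exp (-lam1 * t)) ^ 2 =
      R 1 x := fun x => by
    simp [R, resolventMoment, resolventKernel]
  simp only [hR0, hR1]
  have hw := integrableOn_exp_mul_Ioi hlam0 0
  have hw0 : ∀ᵐ t ∂(volume.restrict (Ioi (0 : ℝ))), 0 < exp (lam0 * t) :=
    ae_of_all _ fun _ => exp_pos _
  have hu : AEStronglyMeasurable (fun t => exp (-lam1 * t)) (volume.restrict (Ioi (0 : ℝ))) := by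
    fun_prop
  have hu01 := ae_restrict_Ioi_exp_neg_mul_mem_Ioc hlam1.le
  have : NeZero (volume.restrict (Ioi (0 : ℝ))) := ⟨by simp [Measure.restrict_eq_zero]⟩
  have hmono := (strictMonoOn_resolventMoment_div hw hw0 hu hu01 0).mono
    (Ioo_subset_Ioo_left (by norm_num : (-1 : ℝ) ≤ 0))
  have hderiv : ∀ θ ∈ Ioo (0 : ℝ) 1, HasDerivAt (fun x => log (-lam0 * R 0 x)) (R 1 θ / R 0 θ) θ :=
    fun θ hθ => by
      have hθ' : |θ| < 1 := abs_lt.2 ⟨by linarith [hθ.1], hθ.2⟩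
      have hpos := resolventMoment_pos hw hw0 hu hu01 0 hθ'
      convert ((hasDerivAt_resolventMoment hw hu (hu01.mono fun _ h => Ioc_subset_Icc_self h) 0
        hθ').const_mul (-lam0)).log (mul_pos (neg_pos.2 hlam0) hpos).ne' using 1
      rw [Nat.cast_zero, zero_add, one_mul, mul_div_mul_left _ _ (neg_ne_zero.2 hlam0.ne)]
  exact ⟨hderiv, hmono, tendsto_atTop_of_hasDerivAt_of_monotoneOn zero_lt_one hderiv
    hmono.monotoneOn (tendsto_log_atTop.comp
      ((tendsto_resolventMoment_exp_atTop hlam0 hlam1).const_mul_atTop (neg_pos.2 hlam0)))⟩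
end

section
/- Fix $\lambda_0 < 0 < \lambda_1$, $\mu > 0$, and for $y \geq 0$ define $F(y,\theta) = \frac{\mu\theta e^{\lambda_1 y}}{\lambda_1-\lambda_0} - \mu\theta\int_0^\infty \frac{e^{\lambda_0 s}}{e^{\lambda_1 s} - \theta}\, ds$ for $\theta \in (0,1)$, and $L(y) = \sup_{\theta \in (0,1)} F(y,\theta)$. Then for $y > 0$: (a) $F(y, \cdot)$ is strictly concave on $(0,1)$; (b) the supremum $L(y)$ is attained at the unique $\theta^* \in (0,1)$ satisfying $\frac{e^{\lambda_1 y}}{\lambda_1-\lambda_0} = \int_0^\infty \frac{e^{\lambda_1 s}}{(e^{\lambda_1 s}-\theta^*)^2} e^{\lambda_0 s}\, ds$; (c) $L(y) > 0$. -/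
open Real MeasureTheory Set Filter Topology

/-!
Pointwise in `s`, the map `θ ↦ θ / (e^{λ₁s} - θ)` is strictly convex for `θ < e^{λ₁s}` and lies
above its tangent lines, whose slope is `e^{λ₁s} / (e^{λ₁s} - θ)²`. Integrating against the weight
`e^{λ₀s}` shows that `θ ↦ θ I(θ)`, with `I` the integral in `F`, is strictly convex on `[0, 1)`
and dominates its "tangent lines" `t I(t) + (u - t) J(t)`, with `J` the integral in (b). Hence
`F(y, ·)` is strictly concave, and any `θ` with `J(θ) = e^{λ₁y}/(λ₁-λ₀)` maximises it; no
differentiation under the integral sign is needed.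

`J` is strictly increasing and continuous on `(0, 1)`. The bound `e^{λ₁s} - θ ≥ (1 - θ) e^{λ₁s}`
gives `J(θ) ≤ (1 - θ)⁻² / (λ₁-λ₀) < e^{λ₁y}/(λ₁-λ₀)` for small `θ`, while the contribution of
`s ∈ (0, 1]` makes `J` blow up like `(1 - θ)⁻¹` as `θ → 1`; the intermediate value theorem gives
the unique root. The same bound gives `F(y, θ) ≥ μθ(e^{λ₁y} - (1 - θ)⁻¹)/(λ₁-λ₀) > 0` for small
`θ`, so `L(y) > 0`.
-/

section IntegralConvexity

variable {α : Type*} [MeasurableSpace α] {μ : Measure α}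

theorem MeasureTheory.integral_lt_integral_of_ae_lt (hμ : μ ≠ 0) {f g : α → ℝ}
    (hf : Integrable f μ) (hg : Integrable g μ) (h : ∀ᵐ a ∂μ, f a < g a) :
    ∫ a, f a ∂μ < ∫ a, g a ∂μ := by
  have := ae_neBot.2 hμ
  rw [← sub_pos, ← integral_sub hg hf,
    integral_pos_iff_support_of_nonneg_ae (h.mono fun a ha => (sub_pos.2 ha).le) (hg.sub hf),
    pos_iff_ne_zero]
  intro h0
  obtain ⟨a, hlt, ha⟩ := (h.and (measure_eq_zero_iff_ae_notMem.1 h0)).exists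
  exact ha (sub_ne_zero.2 hlt.ne')

theorem StrictConvexOn.integral (hμ : μ ≠ 0) {E : Type*} [AddCommGroup E] [Module ℝ E]
    {D : Set E} {f : E → α → ℝ} (hf : ∀ᵐ a ∂μ, StrictConvexOn ℝ D (f · a))
    (hint : ∀ x ∈ D, Integrable (f x) μ) :
    StrictConvexOn ℝ D (fun x => ∫ a, f x a ∂μ) := by
  have := ae_neBot.2 hμ
  obtain ⟨a, ha⟩ := hf.exists
  refine ⟨ha.1, fun x hx y hy hxy p q hp hq hpq => ?_⟩
  have hlt := integral_lt_integral_of_ae_lt hμ (hint _ (ha.1 hx hy hp.le hq.le hpq))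
    (((hint x hx).const_mul p).add ((hint y hy).const_mul q))
    (hf.mono fun a ha => ha.2 hx hy hxy hp hq hpq)
  simp only [Pi.add_apply] at hlt
  rwa [integral_add ((hint x hx).const_mul p) ((hint y hy).const_mul q), integral_const_mul,
    integral_const_mul] at hlt

end IntegralConvexity

theorem volume_restrict_Ioi_ne_zero (a : ℝ) : volume.restrict (Ioi a) ≠ 0 := by
  simp

theorem integrableOn_Ioi_of_le_exp {g : ℝ → ℝ} {a C : ℝ} (ha : a < 0) (hg : Measurable g)
    (hbound : ∀ s ∈ Ioi (0 : ℝ), 0 ≤ g s ∧ g s ≤ C * exp (a * s)) :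
    IntegrableOn g (Ioi 0) :=
  Integrable.mono' ((integrableOn_exp_mul_Ioi ha 0).const_mul C) hg.aestronglyMeasurable <|
    (ae_restrict_iff' measurableSet_Ioi).2 <| Eventually.of_forall fun s hs => by
      rw [norm_of_nonneg (hbound s hs).1]
      exact (hbound s hs).2

theorem setIntegral_Ioi_le_of_le_exp {g : ℝ → ℝ} {a C : ℝ} (ha : a < 0) (hg : Measurable g)
    (hbound : ∀ s ∈ Ioi (0 : ℝ), 0 ≤ g s ∧ g s ≤ C * exp (a * s)) :
    ∫ s in Ioi 0, g s ≤ C * (-a)⁻¹ :=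
  calc ∫ s in Ioi 0, g s ≤ ∫ s in Ioi 0, C * exp (a * s) :=
        setIntegral_mono_on (integrableOn_Ioi_of_le_exp ha hg hbound)
          ((integrableOn_exp_mul_Ioi ha 0).const_mul C) measurableSet_Ioi
          fun s hs => (hbound s hs).2
    _ = C * (-a)⁻¹ := by
        rw [integral_const_mul, integral_exp_mul_Ioi ha, mul_zero, exp_zero, neg_div,
          ← div_neg, one_div]

theorem exists_mem_Ioo_lt_of_inv_one_sub {f : ℝ → ℝ} (hf : ContinuousAt f 1) {c : ℝ}
    (hc : f 1 < c) : ∃ θ ∈ Ioo (0 : ℝ) 1, f (1 - θ)⁻¹ < c := by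
  have hg : ContinuousAt (fun θ : ℝ => f (1 - θ)⁻¹) 0 :=
    ContinuousAt.comp (by simpa using hf)
      ((continuousAt_const.sub continuousAt_id).inv₀ (by simp))
  obtain ⟨θ, hθc, hθ⟩ := (((hg.eventually_lt continuousAt_const (by simpa using hc)).filter_mono
    nhdsWithin_le_nhds).and (Ioo_mem_nhdsGT zero_lt_one)).exists
  exact ⟨θ, hθ, hθc⟩

section Elementary

variable {A c t u : ℝ}

theorem strictConvexOn_mul_div_sub (hc : 0 < c) (hA : 0 < A) :
    StrictConvexOn ℝ (Iio A) (fun t => t * (c / (A - t))) := by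
  refine ⟨convex_Iio A, fun u hu v hv huv p q hp hq hpq => ?_⟩
  obtain rfl : q = 1 - p := by linarith
  simp only [smul_eq_mul, mem_Iio] at *
  have hAu : 0 < A - u := by linarith
  have hAv : 0 < A - v := by linarith
  have hAw : 0 < A - (p * u + (1 - p) * v) := by nlinarith
  have hgap : p * (u * (c / (A - u))) + (1 - p) * (v * (c / (A - v)))
      - (p * u + (1 - p) * v) * (c / (A - (p * u + (1 - p) * v)))
      = c * A * p * (1 - p) * (u - v) ^ 2 / ((A - u) * (A - v) * (A - (p * u + (1 - p) * v))) := by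
    field_simp
    ring
  have : 0 < c * A * p * (1 - p) * (u - v) ^ 2 /
      ((A - u) * (A - v) * (A - (p * u + (1 - p) * v))) := by
    have := sub_ne_zero.2 huv
    positivity
  linarith

theorem mul_div_sub_add_tangent_le (hc : 0 ≤ c) (hA : 0 ≤ A) (ht : t < A) (hu : u < A) :
    t * (c / (A - t)) + (u - t) * (A / (A - t) ^ 2 * c) ≤ u * (c / (A - u)) := by
  have hAt : 0 < A - t := by linarith
  have hAu : 0 < A - u := by linarith
  have hgap : u * (c / (A - u)) - (t * (c / (A - t)) + (u - t) * (A / (A - t) ^ 2 * c))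
      = c * A * (u - t) ^ 2 / ((A - u) * (A - t) ^ 2) := by
    field_simp
    ring
  have : 0 ≤ c * A * (u - t) ^ 2 / ((A - u) * (A - t) ^ 2) := by positivity
  linarith

end Elementary

namespace EarlyRecurrence

noncomputable def resolventIntegral (lam0 lam1 θ : ℝ) : ℝ :=
  ∫ s in Ioi 0, exp (lam0 * s) / (exp (lam1 * s) - θ)

/-- The formal `θ`-derivative of `θ * resolventIntegral lam0 lam1 θ`. -/
noncomputable def resolventIntegralDeriv (lam0 lam1 θ : ℝ) : ℝ :=
  ∫ s in Ioi 0, exp (lam1 * s) / (exp (lam1 * s) - θ) ^ 2 * exp (lam0 * s)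

noncomputable def rateFunction (lam0 lam1 mu y θ : ℝ) : ℝ :=
  mu * θ * exp (lam1 * y) / (lam1 - lam0) - mu * θ * resolventIntegral lam0 lam1 θ

variable {lam0 lam1 θ s : ℝ}

theorem exp_mul_sub_pos (hlam1 : 0 ≤ lam1) (hs : 0 ≤ s) (hθ : θ < 1) :
    0 < exp (lam1 * s) - θ := by
  linarith [one_le_exp (mul_nonneg hlam1 hs)]

theorem one_sub_mul_exp_le (hlam1 : 0 ≤ lam1) (hs : 0 ≤ s) (hθ : 0 ≤ θ) :
    (1 - θ) * exp (lam1 * s) ≤ exp (lam1 * s) - θ := by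
  nlinarith [one_le_exp (mul_nonneg hlam1 hs)]

theorem resolventIntegrand_bounds (hlam1 : 0 ≤ lam1) (hs : 0 ≤ s) (hθ : θ ∈ Ico 0 1) :
    0 ≤ exp (lam0 * s) / (exp (lam1 * s) - θ) ∧
      exp (lam0 * s) / (exp (lam1 * s) - θ) ≤ (1 - θ)⁻¹ * exp ((lam0 - lam1) * s) := by
  have hθ1 : 0 < 1 - θ := sub_pos.2 hθ.2
  refine ⟨div_nonneg (exp_pos _).le (exp_mul_sub_pos hlam1 hs hθ.2).le, ?_⟩
  calc exp (lam0 * s) / (exp (lam1 * s) - θ)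
      ≤ exp (lam0 * s) / ((1 - θ) * exp (lam1 * s)) := by
        gcongr
        exact one_sub_mul_exp_le hlam1 hs hθ.1
    _ = (1 - θ)⁻¹ * exp ((lam0 - lam1) * s) := by
        rw [sub_mul lam0, exp_sub]
        field_simp

theorem resolventDerivIntegrand_bounds (hlam1 : 0 ≤ lam1) (hs : 0 ≤ s) (hθ : θ ∈ Ico 0 1) :
    0 ≤ exp (lam1 * s) / (exp (lam1 * s) - θ) ^ 2 * exp (lam0 * s) ∧
      exp (lam1 * s) / (exp (lam1 * s) - θ) ^ 2 * exp (lam0 * s)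
        ≤ (1 - θ)⁻¹ ^ 2 * exp ((lam0 - lam1) * s) := by
  have hθ1 : 0 < 1 - θ := sub_pos.2 hθ.2
  refine ⟨by positivity, ?_⟩
  calc exp (lam1 * s) / (exp (lam1 * s) - θ) ^ 2 * exp (lam0 * s)
      ≤ exp (lam1 * s) / ((1 - θ) * exp (lam1 * s)) ^ 2 * exp (lam0 * s) := by
        gcongr
        exact one_sub_mul_exp_le hlam1 hs hθ.1
    _ = (1 - θ)⁻¹ ^ 2 * exp ((lam0 - lam1) * s) := by
        rw [sub_mul lam0, exp_sub]
        field_simp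

theorem integrableOn_resolventIntegrand (hlam0 : lam0 < 0) (hlam1 : 0 ≤ lam1)
    (hθ : θ ∈ Ico 0 1) :
    IntegrableOn (fun s => exp (lam0 * s) / (exp (lam1 * s) - θ)) (Ioi 0) :=
  integrableOn_Ioi_of_le_exp (sub_neg.2 (hlam0.trans_le hlam1)) (by fun_prop)
    fun _ hs => resolventIntegrand_bounds hlam1 (le_of_lt hs) hθ

theorem integrableOn_resolventDerivIntegrand (hlam0 : lam0 < 0) (hlam1 : 0 ≤ lam1)
    (hθ : θ ∈ Ico 0 1) :
    IntegrableOn (fun s => exp (lam1 * s) / (exp (lam1 * s) - θ) ^ 2 * exp (lam0 * s))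
      (Ioi 0) :=
  integrableOn_Ioi_of_le_exp (sub_neg.2 (hlam0.trans_le hlam1)) (by fun_prop)
    fun _ hs => resolventDerivIntegrand_bounds hlam1 (le_of_lt hs) hθ

theorem resolventIntegral_le (hlam0 : lam0 < 0) (hlam1 : 0 ≤ lam1) (hθ : θ ∈ Ico 0 1) :
    resolventIntegral lam0 lam1 θ ≤ (1 - θ)⁻¹ * (lam1 - lam0)⁻¹ := by
  have h := setIntegral_Ioi_le_of_le_exp (sub_neg.2 (hlam0.trans_le hlam1)) (by fun_prop)
    fun _ hs => resolventIntegrand_bounds (lam0 := lam0) hlam1 (le_of_lt hs) hθ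
  rwa [neg_sub] at h

theorem resolventIntegralDeriv_le (hlam0 : lam0 < 0) (hlam1 : 0 ≤ lam1) (hθ : θ ∈ Ico 0 1) :
    resolventIntegralDeriv lam0 lam1 θ ≤ (1 - θ)⁻¹ ^ 2 * (lam1 - lam0)⁻¹ := by
  have h := setIntegral_Ioi_le_of_le_exp (sub_neg.2 (hlam0.trans_le hlam1)) (by fun_prop)
    fun _ hs => resolventDerivIntegrand_bounds (lam0 := lam0) hlam1 (le_of_lt hs) hθ
  rwa [neg_sub] at h

theorem strictMonoOn_resolventIntegralDeriv (hlam0 : lam0 < 0) (hlam1 : 0 ≤ lam1) :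
    StrictMonoOn (resolventIntegralDeriv lam0 lam1) (Ico 0 1) := by
  intro a ha b hb hab
  refine integral_lt_integral_of_ae_lt (volume_restrict_Ioi_ne_zero 0)
    (integrableOn_resolventDerivIntegrand hlam0 hlam1 ha)
    (integrableOn_resolventDerivIntegrand hlam0 hlam1 hb)
    ((ae_restrict_iff' measurableSet_Ioi).2 (Eventually.of_forall fun s hs => ?_))
  have := exp_mul_sub_pos hlam1 (le_of_lt hs) hb.2
  gcongr

theorem continuousOn_resolventIntegralDeriv (hlam0 : lam0 < 0) (hlam1 : 0 ≤ lam1) :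
    ContinuousOn (resolventIntegralDeriv lam0 lam1) (Ioo 0 1) := by
  intro θ₀ hθ₀
  obtain ⟨b, hθ₀b, hb1⟩ := exists_between hθ₀.2
  refine (continuousAt_of_dominated
    (bound := fun s => (1 - b)⁻¹ ^ 2 * exp ((lam0 - lam1) * s)) ?_ ?_
    ((integrableOn_exp_mul_Ioi (sub_neg.2 (hlam0.trans_le hlam1)) 0).const_mul _) ?_)
    |>.continuousWithinAt
  · exact Eventually.of_forall fun θ => (by fun_prop : Measurable _).aestronglyMeasurable
  · filter_upwards [Ioo_mem_nhds hθ₀.1 hθ₀b] with θ hθ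
    refine (ae_restrict_iff' measurableSet_Ioi).2 (Eventually.of_forall fun s hs => ?_)
    have hθ' : θ ∈ Ico 0 1 := ⟨hθ.1.le, hθ.2.trans hb1⟩
    obtain ⟨hnonneg, hle⟩ := resolventDerivIntegrand_bounds (lam0 := lam0) hlam1 (le_of_lt hs) hθ'
    rw [norm_of_nonneg hnonneg]
    refine hle.trans ?_
    have : 0 < 1 - b := sub_pos.2 hb1
    have : 0 < 1 - θ := sub_pos.2 hθ'.2
    gcongr
    exact hθ.2.le
  · refine (ae_restrict_iff' measurableSet_Ioi).2 (Eventually.of_forall fun s hs => ?_)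
    exact (continuousAt_const.div ((continuousAt_const.sub continuousAt_id).pow 2)
      (pow_ne_zero 2 (exp_mul_sub_pos hlam1 (le_of_lt hs) hθ₀.2).ne')).mul continuousAt_const

theorem mul_resolventIntegral_add_le (hlam0 : lam0 < 0) (hlam1 : 0 ≤ lam1) {t u : ℝ}
    (ht : t ∈ Ico 0 1) (hu : u ∈ Ico 0 1) :
    t * resolventIntegral lam0 lam1 t + (u - t) * resolventIntegralDeriv lam0 lam1 t
      ≤ u * resolventIntegral lam0 lam1 u := by
  have hIt := (integrableOn_resolventIntegrand hlam0 hlam1 ht).const_mul t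
  have hJt := (integrableOn_resolventDerivIntegrand hlam0 hlam1 ht).const_mul (u - t)
  have hIu := (integrableOn_resolventIntegrand hlam0 hlam1 hu).const_mul u
  rw [resolventIntegral, resolventIntegralDeriv, resolventIntegral, ← integral_const_mul,
    ← integral_const_mul, ← integral_const_mul, ← integral_add hIt hJt]
  refine setIntegral_mono_on (hIt.add hJt) hIu measurableSet_Ioi fun s hs => ?_
  have h1 := one_le_exp (mul_nonneg hlam1 (le_of_lt hs))
  exact mul_div_sub_add_tangent_le (exp_pos _).le (by linarith) (by linarith [ht.2])
    (by linarith [hu.2])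

theorem strictConvexOn_mul_resolventIntegral (hlam0 : lam0 < 0) (hlam1 : 0 ≤ lam1) :
    StrictConvexOn ℝ (Ico 0 1) (fun θ => θ * resolventIntegral lam0 lam1 θ) := by
  simp_rw [resolventIntegral, ← integral_const_mul]
  refine StrictConvexOn.integral (volume_restrict_Ioi_ne_zero 0) ?_
    fun θ hθ => (integrableOn_resolventIntegrand hlam0 hlam1 hθ).const_mul θ
  refine (ae_restrict_iff' measurableSet_Ioi).2 (Eventually.of_forall fun s hs => ?_)
  have h1 := one_le_exp (mul_nonneg hlam1 (le_of_lt hs))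
  exact (strictConvexOn_mul_div_sub (exp_pos _) (by linarith)).subset
    (fun θ hθ => hθ.2.trans_le h1) (convex_Ico 0 1)

theorem strictConcaveOn_rateFunction (hlam0 : lam0 < 0) (hlam1 : 0 ≤ lam1) {mu : ℝ}
    (hmu : 0 < mu) (y : ℝ) :
    StrictConcaveOn ℝ (Ico 0 1) (rateFunction lam0 lam1 mu y) := by
  have hg := strictConvexOn_mul_resolventIntegral hlam0 hlam1
  refine ⟨hg.1, fun u hu v hv huv p q hp hq hpq => ?_⟩
  have := mul_lt_mul_of_pos_left (hg.2 hu hv huv hp hq hpq) hmu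
  simp only [rateFunction, smul_eq_mul] at this ⊢
  linear_combination this

theorem rateFunction_le_of_resolventIntegralDeriv_eq (hlam0 : lam0 < 0) (hlam1 : 0 ≤ lam1)
    {mu y t u : ℝ} (hmu : 0 ≤ mu) (ht : t ∈ Ico 0 1) (hu : u ∈ Ico 0 1)
    (hJ : exp (lam1 * y) / (lam1 - lam0) = resolventIntegralDeriv lam0 lam1 t) :
    rateFunction lam0 lam1 mu y u ≤ rateFunction lam0 lam1 mu y t := by
  have := mul_le_mul_of_nonneg_left (mul_resolventIntegral_add_le hlam0 hlam1 ht hu) hmu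
  simp only [rateFunction, mul_div_assoc, hJ]
  linear_combination this

theorem integral_exp_div_exp_sub_sq (hlam1 : 0 ≤ lam1) (hθ : θ < 1) :
    ∫ s in (0 : ℝ)..1, lam1 * exp (lam1 * s) / (exp (lam1 * s) - θ) ^ 2
      = (1 - θ)⁻¹ - (exp lam1 - θ)⁻¹ := by
  have hne : ∀ s ∈ uIcc (0 : ℝ) 1, exp (lam1 * s) - θ ≠ 0 := fun s hs =>
    (exp_mul_sub_pos hlam1 (by rw [uIcc_of_le zero_le_one] at hs; exact hs.1) hθ).ne'
  have hderiv : ∀ s ∈ uIcc (0 : ℝ) 1, HasDerivAt (fun s => -(exp (lam1 * s) - θ)⁻¹)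
      (lam1 * exp (lam1 * s) / (exp (lam1 * s) - θ) ^ 2) s := by
    intro s hs
    have h := ((((hasDerivAt_id' s).const_mul lam1).exp.sub_const θ).inv (hne s hs)).neg
    exact h.congr_deriv (by ring)
  rw [intervalIntegral.integral_eq_sub_of_hasDerivAt hderiv
    (ContinuousOn.intervalIntegrable (ContinuousOn.div (by fun_prop) (by fun_prop)
      fun s hs => pow_ne_zero 2 (hne s hs)))]
  simp only [mul_one, mul_zero, exp_zero]
  ring

theorem resolventIntegralDeriv_ge (hlam0 : lam0 < 0) (hlam1 : 0 < lam1) (hθ : θ ∈ Ico 0 1) :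
    exp lam0 / lam1 * ((1 - θ)⁻¹ - (exp lam1 - θ)⁻¹) ≤ resolventIntegralDeriv lam0 lam1 θ := by
  have hint := integrableOn_resolventDerivIntegrand hlam0 hlam1.le hθ
  rw [← integral_exp_div_exp_sub_sq hlam1.le hθ.2, ← intervalIntegral.integral_const_mul,
    intervalIntegral.integral_of_le zero_le_one]
  calc _ ≤ ∫ s in Ioc 0 1, exp (lam1 * s) / (exp (lam1 * s) - θ) ^ 2 * exp (lam0 * s) := by
        refine setIntegral_mono_on ?_ (hint.mono_set Ioc_subset_Ioi_self) measurableSet_Ioc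
          fun s hs => ?_
        · refine ContinuousOn.integrableOn_compact isCompact_Icc ?_ |>.mono_set Ioc_subset_Icc_self
          exact continuousOn_const.mul (ContinuousOn.div (by fun_prop) (by fun_prop)
            fun s hs => pow_ne_zero 2 (exp_mul_sub_pos hlam1.le hs.1 hθ.2).ne')
        · have : exp lam0 ≤ exp (lam0 * s) := exp_le_exp.2 (by nlinarith [hs.1, hs.2])
          calc exp lam0 / lam1 * (lam1 * exp (lam1 * s) / (exp (lam1 * s) - θ) ^ 2)
              = exp (lam1 * s) / (exp (lam1 * s) - θ) ^ 2 * exp lam0 := by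
                field_simp
            _ ≤ _ := by gcongr
    _ ≤ resolventIntegralDeriv lam0 lam1 θ :=
        setIntegral_mono_set hint
          ((ae_restrict_iff' measurableSet_Ioi).2 (Eventually.of_forall fun s hs =>
            (resolventDerivIntegrand_bounds hlam1.le (le_of_lt hs) hθ).1))
          Ioc_subset_Ioi_self.eventuallyLE

theorem tendsto_resolventIntegralDeriv_nhdsLT_one (hlam0 : lam0 < 0) (hlam1 : 0 < lam1) :
    Tendsto (resolventIntegralDeriv lam0 lam1) (𝓝[<] 1) atTop := by
  have hinv : Tendsto (fun θ : ℝ => (1 - θ)⁻¹) (𝓝[<] 1) atTop := by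
    refine tendsto_inv_nhdsGT_zero.comp (tendsto_nhdsWithin_iff.2 ⟨?_, ?_⟩)
    · exact ((continuous_sub_left 1).tendsto' 1 0 (sub_self 1)).mono_left nhdsWithin_le_nhds
    · filter_upwards [self_mem_nhdsWithin] with θ (hθ : θ < 1) using sub_pos.2 hθ
  have hlower := (hinv.atTop_add ((((continuous_sub_left (exp lam1)).tendsto 1).inv₀
    (sub_pos.2 (one_lt_exp_iff.2 hlam1)).ne').neg.mono_left nhdsWithin_le_nhds)).const_mul_atTop
    (div_pos (exp_pos lam0) hlam1)
  refine tendsto_atTop_mono' _ ?_ hlower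
  filter_upwards [Ioo_mem_nhdsLT zero_lt_one] with θ hθ
  simpa [sub_eq_add_neg] using resolventIntegralDeriv_ge hlam0 hlam1 ⟨hθ.1.le, hθ.2⟩

theorem exists_resolventIntegralDeriv_eq (hlam0 : lam0 < 0) (hlam1 : 0 < lam1) {c : ℝ}
    (hc : (lam1 - lam0)⁻¹ < c) : ∃ θ ∈ Ioo 0 1, resolventIntegralDeriv lam0 lam1 θ = c := by
  obtain ⟨a, ha, hac⟩ := exists_mem_Ioo_lt_of_inv_one_sub (f := fun x => x ^ 2 * (lam1 - lam0)⁻¹)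
    (by fun_prop) (by simpa using hc)
  have hJa : resolventIntegralDeriv lam0 lam1 a < c :=
    (resolventIntegralDeriv_le hlam0 hlam1.le ⟨ha.1.le, ha.2⟩).trans_lt hac
  have hJ_top := tendsto_resolventIntegralDeriv_nhdsLT_one hlam0 hlam1
  obtain ⟨b, hcb, hb⟩ := ((hJ_top.eventually_gt_atTop c).and (Ioo_mem_nhdsLT ha.2)).exists
  obtain ⟨θ, hθ, hJθ⟩ := intermediate_value_Ioo hb.1.le
    ((continuousOn_resolventIntegralDeriv hlam0 hlam1.le).mono (Icc_subset_Ioo ha.1 hb.2))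
    ⟨hJa, hcb⟩
  exact ⟨θ, ⟨ha.1.trans hθ.1, hθ.2.trans hb.2⟩, hJθ⟩

theorem exists_rateFunction_pos (hlam0 : lam0 < 0) (hlam1 : 0 < lam1) {mu y : ℝ} (hmu : 0 < mu)
    (hy : 0 < y) : ∃ θ ∈ Ioo 0 1, 0 < rateFunction lam0 lam1 mu y θ := by
  obtain ⟨θ, hθ, hθy⟩ := exists_mem_Ioo_lt_of_inv_one_sub (f := id) continuousAt_id
    (one_lt_exp_iff.2 (mul_pos hlam1 hy))
  refine ⟨θ, hθ, ?_⟩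
  have hI := resolventIntegral_le hlam0 hlam1.le ⟨hθ.1.le, hθ.2⟩
  have hgap : 0 < mu * θ * (lam1 - lam0)⁻¹ * (exp (lam1 * y) - (1 - θ)⁻¹) := by
    have := sub_pos.2 hθy
    have := sub_pos.2 (hlam0.trans hlam1)
    have := hθ.1
    positivity
  have := mul_le_mul_of_nonneg_left hI (mul_pos hmu hθ.1).le
  simp only [rateFunction, div_eq_mul_inv]
  linarith

end EarlyRecurrence

open EarlyRecurrence

/-- For `F(y,θ) = μθe^{λ₁y}/(λ₁-λ₀) - μθ∫₀^∞ e^{λ₀s}/(e^{λ₁s}-θ) ds` and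
`L(y) = sup_{θ∈(0,1)} F(y,θ)`, for `y > 0`: (a) `F(y,·)` is strictly concave on `(0,1)`;
(b) the supremum is attained at the unique `θ* ∈ (0,1)` solving the stated equation;
(c) `L(y) > 0`. -/
theorem stmt_17 (lam0 lam1 mu y : ℝ) (hlam0 : lam0 < 0) (hlam1 : 0 < lam1)
    (hmu : 0 < mu) (hy : 0 < y) :
    StrictConcaveOn ℝ (Set.Ioo (0:ℝ) 1) (fun theta : ℝ =>
        mu * theta * Real.exp (lam1 * y) / (lam1 - lam0) -
          mu * theta * ∫ s in Set.Ioi (0:ℝ),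
            Real.exp (lam0 * s) / (Real.exp (lam1 * s) - theta)) ∧
    (∃! theta : ℝ, theta ∈ Set.Ioo (0:ℝ) 1 ∧
      Real.exp (lam1 * y) / (lam1 - lam0) =
        ∫ s in Set.Ioi (0:ℝ),
          Real.exp (lam1 * s) / (Real.exp (lam1 * s) - theta) ^ 2 * Real.exp (lam0 * s)) ∧
    (∀ theta : ℝ, theta ∈ Set.Ioo (0:ℝ) 1 →
      Real.exp (lam1 * y) / (lam1 - lam0) =
        (∫ s in Set.Ioi (0:ℝ),
          Real.exp (lam1 * s) / (Real.exp (lam1 * s) - theta) ^ 2 * Real.exp (lam0 * s)) →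
      IsGreatest ((fun theta : ℝ =>
          mu * theta * Real.exp (lam1 * y) / (lam1 - lam0) -
            mu * theta * ∫ s in Set.Ioi (0:ℝ),
              Real.exp (lam0 * s) / (Real.exp (lam1 * s) - theta)) '' Set.Ioo (0:ℝ) 1)
        (mu * theta * Real.exp (lam1 * y) / (lam1 - lam0) -
          mu * theta * ∫ s in Set.Ioi (0:ℝ),
            Real.exp (lam0 * s) / (Real.exp (lam1 * s) - theta))) ∧
    0 < sSup ((fun theta : ℝ =>
        mu * theta * Real.exp (lam1 * y) / (lam1 - lam0) -
          mu * theta * ∫ s in Set.Ioi (0:ℝ),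
            Real.exp (lam0 * s) / (Real.exp (lam1 * s) - theta)) '' Set.Ioo (0:ℝ) 1) := by
  have hc : (lam1 - lam0)⁻¹ < exp (lam1 * y) / (lam1 - lam0) := by
    rw [div_eq_mul_inv, lt_mul_iff_one_lt_left (inv_pos.2 (sub_pos.2 (hlam0.trans hlam1)))]
    exact one_lt_exp_iff.2 (mul_pos hlam1 hy)
  obtain ⟨θ₀, hθ₀, hJθ₀⟩ := exists_resolventIntegralDeriv_eq hlam0 hlam1 hc
  have hmax : ∀ θ ∈ Ioo (0 : ℝ) 1,
      exp (lam1 * y) / (lam1 - lam0) = resolventIntegralDeriv lam0 lam1 θ →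
      IsGreatest (rateFunction lam0 lam1 mu y '' Ioo 0 1) (rateFunction lam0 lam1 mu y θ) :=
    fun θ hθ hJ => ⟨mem_image_of_mem _ hθ, forall_mem_image.2 fun u hu =>
      rateFunction_le_of_resolventIntegralDeriv_eq hlam0 hlam1.le hmu.le (Ioo_subset_Ico_self hθ)
        (Ioo_subset_Ico_self hu) hJ⟩
  obtain ⟨θ₁, hθ₁, hpos⟩ := exists_rateFunction_pos hlam0 hlam1 hmu hy
  refine ⟨(strictConcaveOn_rateFunction hlam0 hlam1.le hmu y).subset Ioo_subset_Ico_self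
      (convex_Ioo 0 1), ⟨θ₀, ⟨hθ₀, hJθ₀.symm⟩, fun θ hθ => ?_⟩, hmax, ?_⟩
  · exact (strictMonoOn_resolventIntegralDeriv hlam0 hlam1.le).injOn (Ioo_subset_Ico_self hθ.1)
      (Ioo_subset_Ico_self hθ₀) (hθ.2.symm.trans hJθ₀.symm)
  · exact hpos.trans_le (le_csSup (hmax θ₀ hθ₀ hJθ₀.symm).bddAbove (mem_image_of_mem _ hθ₁))
end
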